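/- Let λ > 2. Then 0 does not lie in the closure of 𝓔₁, and the Möbius transformation z ↦ (λz − 2)/(2z), i.e. the action of the matrix C⁻¹ = !![λ/2, -1; 1, 0] (the inverse of C = !![0, 1; -1, λ/2]), maps 𝓔₁ bijectively onto the open unit disc {w ∈ ℂ : |w| < 1}. -/

import Mathlib

/-!
Writing `f z = (λz − 2)/(2z)`, for `z ≠ 0` we have `|f z| < 1 ↔ |λz − 2|² < |2z|²`, and
`|λz − 2|² − |2z|² = (λ² − 4)(|z − c|² − r²)` with `c, r` the center and radius of `𝓔₁`
(Apollonius). So `f` maps `𝓔₁ ∌ 0` into the unit disc, and since `f z = λ/2 − z⁻¹` it is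
injective with inverse `w ↦ (λ/2 − w)⁻¹`, which is defined on the unit disc because `|λ/2| > 1`.
-/

open Complex Metric

namespace Cinv

variable {lam : ℝ}

noncomputable def center (lam : ℝ) : ℝ := 2 * lam / ((lam + 2) * (lam - 2))

noncomputable def radius (lam : ℝ) : ℝ := 4 / ((lam + 2) * (lam - 2))

lemma discr_pos (hlam : 2 < |lam|) : 0 < (lam + 2) * (lam - 2) := by
  nlinarith [sq_abs lam, abs_nonneg lam]

lemma radius_pos (hlam : 2 < |lam|) : 0 < radius lam :=
  div_pos four_pos (discr_pos hlam)

lemma zero_notMem_closedBall (hlam : 2 < |lam|) :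
    (0 : ℂ) ∉ closedBall (center lam : ℂ) (radius lam) := by
  have hD := discr_pos hlam
  rw [mem_closedBall, dist_eq, zero_sub, norm_neg, norm_real, Real.norm_eq_abs, center, radius,
    abs_div, abs_mul, abs_two, abs_of_pos hD, not_le, div_lt_div_iff_of_pos_right hD]
  linarith

lemma normSq_mul_sub_two_sub_normSq_two_mul (hD : (lam + 2) * (lam - 2) ≠ 0) (z : ℂ) :
    normSq (lam * z - 2) - normSq (2 * z) =
      (lam + 2) * (lam - 2) * (normSq (z - center lam) - radius lam ^ 2) := by
  have hl₁ : lam + 2 ≠ 0 := left_ne_zero_of_mul hD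
  have hl₂ : lam - 2 ≠ 0 := right_ne_zero_of_mul hD
  simp only [normSq_apply, sub_re, sub_im, mul_re, mul_im, ofReal_re, ofReal_im, re_ofNat,
    im_ofNat, center, radius]
  field_simp
  ring

lemma norm_div_lt_one_iff_mem_ball (hlam : 2 < |lam|) {z : ℂ} (hz : z ≠ 0) :
    ‖(lam * z - 2) / (2 * z)‖ < 1 ↔ z ∈ ball (center lam : ℂ) (radius lam) := by
  have hD := discr_pos hlam
  rw [norm_div, div_lt_one (norm_pos_iff.2 (mul_ne_zero two_ne_zero hz)), mem_ball, dist_eq,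
    ← sq_lt_sq₀ (norm_nonneg _) (norm_nonneg _), ← sq_lt_sq₀ (norm_nonneg _) (radius_pos hlam).le,
    Complex.sq_norm, Complex.sq_norm, Complex.sq_norm, ← sub_neg, normSq_mul_sub_two_sub_normSq_two_mul hD.ne',
    ← sub_neg (b := radius lam ^ 2)]
  exact ⟨fun h => neg_of_mul_neg_right h hD.le, mul_neg_of_pos_of_neg hD⟩

lemma mul_sub_two_div_two_mul_eq {z : ℂ} (hz : z ≠ 0) :
    (lam * z - 2) / (2 * z) = lam / 2 - z⁻¹ := by
  field_simp

lemma half_sub_ne_zero_of_mem_ball (hlam : 2 < |lam|) {w : ℂ} (hw : w ∈ ball (0 : ℂ) 1) :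
    (lam / 2 - w : ℂ) ≠ 0 := by
  rw [sub_ne_zero]
  rintro rfl
  rw [mem_ball_zero_iff, norm_div, norm_real, Real.norm_eq_abs, RCLike.norm_ofNat] at hw
  linarith

theorem bijOn_ball (hlam : 2 < |lam|) :
    Set.BijOn (fun z : ℂ => (lam * z - 2) / (2 * z))
      (ball (center lam : ℂ) (radius lam)) (ball (0 : ℂ) 1) := by
  have ne_zero {z : ℂ} (hz : z ∈ ball (center lam : ℂ) (radius lam)) : z ≠ 0 := by
    rintro rfl
    exact zero_notMem_closedBall hlam (ball_subset_closedBall hz)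
  refine ⟨fun z hz => ?_, fun z₁ h₁ z₂ h₂ h => ?_, fun w hw => ?_⟩
  · rw [mem_ball_zero_iff]
    exact (norm_div_lt_one_iff_mem_ball hlam (ne_zero hz)).2 hz
  · simp only [mul_sub_two_div_two_mul_eq (ne_zero h₁), mul_sub_two_div_two_mul_eq (ne_zero h₂),
      sub_right_inj, inv_inj] at h
    exact h
  · have hz := inv_ne_zero (half_sub_ne_zero_of_mem_ball hlam hw)
    have hfz : (lam * (lam / 2 - w)⁻¹ - 2) / (2 * (lam / 2 - w)⁻¹) = w := by
      rw [mul_sub_two_div_two_mul_eq hz, inv_inv, sub_sub_cancel]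
    refine ⟨_, (norm_div_lt_one_iff_mem_ball hlam hz).1 ?_, hfz⟩
    rwa [hfz, ← mem_ball_zero_iff]

end Cinv

theorem Cinv_maps_E1_onto_unit_disc
    (lam : ℝ) (hlam : 2 < lam)
    (E1 : Set ℂ)
    (hE1 : E1 = Metric.ball ((((2 * lam) / ((lam + 2) * (lam - 2)) : ℝ)) : ℂ)
      (4 / ((lam + 2) * (lam - 2)))) :
    (0 : ℂ) ∉ closure E1 ∧
    Set.BijOn (fun z : ℂ => ((lam : ℂ) * z - 2) / (2 * z)) E1 (Metric.ball (0 : ℂ) 1) := by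
  have hlam' : 2 < |lam| := hlam.trans_le (le_abs_self lam)
  change E1 = ball (Cinv.center lam : ℂ) (Cinv.radius lam) at hE1
  subst hE1
  rw [closure_ball _ (Cinv.radius_pos hlam').ne']
  exact ⟨Cinv.zero_notMem_closedBall hlam', Cinv.bijOn_ball hlam'⟩
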